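/- arXiv:2508.18838 — 3 statements merged into one kernel-verified Lean document; each statement's English description precedes it below -/
import Mathlib

section
/- Let d ≥ 1 and k ≥ 1, and let G = (V,D) be a graph with no isolated vertices whose edge set D is a k-fold R_d-circuit. Then |D| ≤ d|V| − binom(d+1,2) + k, with equality if and only if G is R_d-rigid. Moreover, the minimum degree δ(G) of G satisfies d + 1 ≤ δ(G) ≤ 2d + (2k − d(d+1))/|V|. -/
open scoped BigOperators

/-- The row of the `d`-dimensional rigidity matrix of a realisation `p : V → ℝ^d`
indexed by the (unordered) edge `e`. -/
noncomputable def rigRow (d : ℕ) {V : Type*} [DecidableEq V]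
    (p : V → Fin d → ℝ) (e : Sym2 V) : V × Fin d → ℝ :=
  Sym2.lift
    ⟨fun u v wi =>
        (((if wi.1 = u then (1 : ℝ) else 0) - (if wi.1 = v then (1 : ℝ) else 0)) *
          (p u wi.2 - p v wi.2)),
      fun u v => by funext wi; ring⟩ e

/-- A realisation is generic if the coordinates of the points form an algebraically
independent set over `ℚ`. -/
def Generic (d : ℕ) {V : Type*} (p : V → Fin d → ℝ) : Prop :=
  AlgebraicIndependent ℚ fun vi : V × Fin d => p vi.1 vi.2

/-- `rrk d p F` : the rank of the set of rows of the rigidity matrix of `(K_V, p)`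
indexed by the edges in `F`.  For generic `p` this is the rank function `r_d` of
the generic `d`-dimensional rigidity matroid. -/
noncomputable def rrk (d : ℕ) {V : Type*} [Fintype V] [DecidableEq V]
    (p : V → Fin d → ℝ) (F : Set (Sym2 V)) : ℕ :=
  Module.finrank ℝ (Submodule.span ℝ (rigRow d p '' F))

/-- `D` is a `k`-fold circuit (with respect to the realisation `p`) :
`r (D \ {f}) = r D` for every `f ∈ D`, and `r D = |D| - k`. -/
def IsKFoldCircuit (d : ℕ) {V : Type*} [Fintype V] [DecidableEq V]
    (p : V → Fin d → ℝ) (D : Finset (Sym2 V)) (k : ℕ) : Prop :=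
  (∀ f ∈ D, rrk d p (↑D \ {f}) = rrk d p ↑D) ∧ rrk d p ↑D + k = D.card

/-- An `R_d`-circuit: `r C = |C| - 1` and `r (C \ {f}) = r C` for all `f ∈ C`. -/
def IsCircuit (d : ℕ) {V : Type*} [Fintype V] [DecidableEq V]
    (p : V → Fin d → ℝ) (C : Finset (Sym2 V)) : Prop :=
  IsKFoldCircuit d p C 1

/-- `A` is a part of the principal partition of the `k`-fold circuit `D`:
the parts are the sets `D \ B` where `B` runs over the `(k-1)`-fold circuits
contained in `D`. -/
def IsPrincipalPart (d : ℕ) {V : Type*} [Fintype V] [DecidableEq V]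
    (p : V → Fin d → ℝ) (D : Finset (Sym2 V)) (k : ℕ) (A : Finset (Sym2 V)) : Prop :=
  ∃ B ⊆ D, IsKFoldCircuit d p B (k - 1) ∧ A = D \ B

/-- Closure in the rigidity matroid: all edges of `K_V` whose addition to `F`
does not increase the rank. -/
def rcl (d : ℕ) {V : Type*} [Fintype V] [DecidableEq V]
    (p : V → Fin d → ℝ) (F : Set (Sym2 V)) : Set (Sym2 V) :=
  {e | ¬ e.IsDiag ∧ rrk d p (insert e F) = rrk d p F}

/-- A `k`-fold circuit `D` with principal partition `A_1, …, A_ℓ` is balanced if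
`r_d (⋂ i, cl_d (D \ A_i)) = ℓ - k`. -/
def IsBalanced (d : ℕ) {V : Type*} [Fintype V] [DecidableEq V]
    (p : V → Fin d → ℝ) (D : Finset (Sym2 V)) (k : ℕ) : Prop :=
  rrk d p (⋂ A ∈ {A | IsPrincipalPart d p D k A}, rcl d p ↑(D \ A)) + k =
    Set.ncard {A | IsPrincipalPart d p D k A}

/-- A vertex is monochromatic if all edges of `D` incident with it lie in a single
part of the principal partition (and technicolour otherwise). -/
def Monochromatic (d : ℕ) {V : Type*} [Fintype V] [DecidableEq V]
    (p : V → Fin d → ℝ) (D : Finset (Sym2 V)) (k : ℕ) (w : V) : Prop :=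
  ∃ A, IsPrincipalPart d p D k A ∧ ∀ e ∈ D, w ∈ e → e ∈ A

/-- The graph `(W, E)` is `R_d`-rigid: it is a complete graph on at most `d+1`
vertices, or `r_d(E) = d|W| - (d+1 choose 2)`. -/
def IsRigidOn (d : ℕ) {V : Type*} [Fintype V] [DecidableEq V]
    (p : V → Fin d → ℝ) (W : Finset V) (E : Finset (Sym2 V)) : Prop :=
  (W.card ≤ d + 1 ∧ ∀ u ∈ W, ∀ w ∈ W, u ≠ w → s(u, w) ∈ E) ∨
    (rrk d p ↑E : ℤ) + ((d + 1).choose 2 : ℤ) = (d : ℤ) * (W.card : ℤ)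

/-- The edge set of the cone of (the graph with edge set) `D` over a new vertex,
realised as `none : Option V`. -/
def coneEdges {V : Type*} [Fintype V] [DecidableEq V] (D : Finset (Sym2 V)) :
    Finset (Sym2 (Option V)) :=
  D.image (Sym2.map Option.some) ∪
    Finset.univ.image fun u : V => s((Option.some u : Option V), (none : Option V))

/-- The degree of the vertex `w` in the edge set `D`. -/
def degIn {V : Type*} [Fintype V] [DecidableEq V] (D : Finset (Sym2 V)) (w : V) : ℕ :=
  (D.filter fun e => w ∈ e).card

/-- The set of vertices incident with an edge of `F`. -/
def esupp {V : Type*} [Fintype V] [DecidableEq V] (F : Finset (Sym2 V)) : Finset V :=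
  Finset.univ.filter fun w => ∃ e ∈ F, w ∈ e

/-!
For a generic realisation, every row of the rigidity matrix is orthogonal to the space of
infinitesimal trivial motions (translations and rotations), whose dimension is `binom(d+1, 2)`
once there are at least `d + 1` vertices; hence `r_d(D) ≤ d|V| - binom(d+1, 2)`. As
`|D| = r_d(D) + k`, this is the edge bound, and equality means that `D` has the rank of a
rigid graph (a complete graph on at most `d + 1` vertices is excluded by the degree bound).

If a vertex `w` had at most `d` neighbours `u`, then the `w`-coordinates of the rows of the edges
`wu` would be the vectors `p w - p u`, linearly independent by genericity, while those of all
other rows vanish. So no edge at `w` would lie in the span of the remaining rows, contradicting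
the circuit property. Finally, the minimum degree is at most the average degree `2|D|/|V|`.
-/

open Finset Matrix SimpleGraph

section Generic

variable {V : Type*} {d : ℕ} {p : V → Fin d → ℝ}

theorem Generic.aeval_ne_zero (hp : Generic d p) {q : MvPolynomial (V × Fin d) ℚ} (hq : q ≠ 0) :
    MvPolynomial.aeval (fun vi : V × Fin d => p vi.1 vi.2) q ≠ 0 :=
  fun h => hq (hp (by rw [h, map_zero]))

open MvPolynomial in
theorem Generic.det_sub_ne_zero (hp : Generic d p) {m : ℕ} (hm : m ≤ d) {u : Fin m → V}
    (hu : Function.Injective u) {w : V} (hw : ∀ j, u j ≠ w) :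
    (Matrix.of fun i j : Fin m => p w (Fin.castLE hm i) - p (u j) (Fin.castLE hm i)).det ≠ 0 := by
  classical
  set Q : Matrix (Fin m) (Fin m) (MvPolynomial (V × Fin d) ℚ) :=
    .of fun i j => X (w, Fin.castLE hm i) - X (u j, Fin.castLE hm i)
  have hQ : (aeval fun vi : V × Fin d => p vi.1 vi.2).mapMatrix Q =
      .of fun i j => p w (Fin.castLE hm i) - p (u j) (Fin.castLE hm i) := by
    ext i j
    simp [Q]
  rw [← hQ, ← AlgHom.map_det]
  refine hp.aeval_ne_zero fun hQ₀ => ?_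
  -- Specialising the variables `(u i, i)` to `-1` and all others to `0` sends `Q` to `1`.
  let σ : V × Fin d → ℚ := fun vi =>
    if h : (vi.2 : ℕ) < m then -if u ⟨vi.2, h⟩ = vi.1 then 1 else 0 else 0
  have hσ : (eval σ).mapMatrix Q = 1 := by
    ext i j
    simp [Q, σ, (hw i).symm, hu.eq_iff, Matrix.one_apply, eq_comm]
  have := congrArg (eval σ) hQ₀
  rw [RingHom.map_det, hσ, det_one, map_zero] at this
  exact one_ne_zero this

theorem Generic.linearIndependent_sub (hp : Generic d p) {ι : Type*} [Fintype ι] {u : ι → V}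
    (hu : Function.Injective u) {w : V} (hw : ∀ j, u j ≠ w) (hcard : Fintype.card ι ≤ d) :
    LinearIndependent ℝ fun j => p w - p (u j) := by
  let e := Fintype.equivFin ι
  suffices LinearIndependent ℝ fun j => p w - p (u (e.symm j)) by
    simpa [Function.comp_def] using this.comp e e.injective
  have hM := hp.det_sub_ne_zero hcard (hu.comp e.symm.injective) fun j => hw _
  exact .of_comp (LinearMap.funLeft ℝ ℝ (Fin.castLE hcard))
    (linearIndependent_cols_of_det_ne_zero hM)

theorem Generic.exists_span_sub_eq_top [Fintype V] (hp : Generic d p)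
    (hn : d + 1 ≤ Fintype.card V) :
    ∃ (w : V) (u : Fin d → V), Submodule.span ℝ (Set.range fun j => p w - p (u j)) = ⊤ := by
  obtain ⟨u⟩ := Function.Embedding.nonempty_of_card_le
    (by simpa using hn : Fintype.card (Fin (d + 1)) ≤ Fintype.card V)
  refine ⟨u (Fin.last d), fun j => u j.castSucc, ?_⟩
  have hne : ∀ j : Fin d, u j.castSucc ≠ u (Fin.last d) := fun j h =>
    (Fin.castSucc_lt_last j).ne (u.injective h)
  exact (hp.linearIndependent_sub (u.injective.comp (Fin.castSucc_injective d)) hne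
    (by simp)).span_eq_top_of_card_eq_finrank' (by simp)

end Generic

section RigidityMatrix

variable {V : Type*} [DecidableEq V] {d : ℕ} {p : V → Fin d → ℝ}

theorem rigRow_mk_apply (a b : V) (x : V × Fin d) :
    rigRow d p s(a, b) x =
      ((if x.1 = a then 1 else 0) - (if x.1 = b then 1 else 0)) * (p a x.2 - p b x.2) :=
  rfl

theorem rigRow_dotProduct [Fintype V] (a b : V) (x : V × Fin d → ℝ) :
    rigRow d p s(a, b) ⬝ᵥ x = (p a - p b) ⬝ᵥ fun i => x (a, i) - x (b, i) := by
  calc rigRow d p s(a, b) ⬝ᵥ x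
      = ∑ v, ((if v = a then 1 else 0) - (if v = b then 1 else 0)) *
          ((p a - p b) ⬝ᵥ fun i => x (v, i)) := by
        simp only [dotProduct, Fintype.sum_prod_type, rigRow_mk_apply, mul_sum, mul_assoc,
          Pi.sub_apply]
    _ = (p a - p b) ⬝ᵥ fun i => x (a, i) - x (b, i) := by
        simp only [dotProduct, Pi.sub_apply, sub_mul, sum_sub_distrib, mul_sub, ite_mul, one_mul,
          zero_mul, sum_ite_eq', mem_univ, if_true]
        ring

theorem funLeft_rigRow_mk {u w : V} (h : u ≠ w) :
    LinearMap.funLeft ℝ ℝ (Prod.mk w) (rigRow d p s(w, u)) = p w - p u := by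
  ext i
  simp [LinearMap.funLeft, rigRow_mk_apply, h.symm]

theorem funLeft_rigRow_of_notMem {e : Sym2 V} {w : V} (h : w ∉ e) :
    LinearMap.funLeft ℝ ℝ (Prod.mk w) (rigRow d p e) = 0 := by
  induction e using Sym2.ind with
  | _ a b =>
    obtain ⟨ha, hb⟩ : w ≠ a ∧ w ≠ b := by simpa [not_or] using h
    ext i
    simp [LinearMap.funLeft, rigRow_mk_apply, ha, hb]

end RigidityMatrix

section TrivialMotions

variable {V : Type*} {d : ℕ} {p : V → Fin d → ℝ}

def planeRot (A B : Fin d) : (Fin d → ℝ) →ₗ[ℝ] Fin d → ℝ :=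
  (LinearMap.proj B).smulRight (Pi.single A 1) - (LinearMap.proj A).smulRight (Pi.single B 1)

theorem planeRot_apply (A B : Fin d) (y : Fin d → ℝ) :
    planeRot A B y = y B • Pi.single A 1 - y A • Pi.single B 1 :=
  rfl

theorem dotProduct_planeRot_self (A B : Fin d) (y : Fin d → ℝ) : y ⬝ᵥ planeRot A B y = 0 := by
  simp [planeRot_apply, dotProduct_sub, dotProduct_smul, mul_comm]

abbrev TrivialMotionIndex (d : ℕ) := Fin d ⊕ {q : Fin d × Fin d // q.1 < q.2}

theorem card_trivialMotionIndex : Fintype.card (TrivialMotionIndex d) = (d + 1).choose 2 := by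
  rw [Fintype.card_sum, Fintype.card_subtype, Fintype.card_product_filter_lt, Fintype.card_fin,
    Nat.choose_succ_succ, Nat.choose_one_right]

def trivialMotion (p : V → Fin d → ℝ) : TrivialMotionIndex d → V × Fin d → ℝ
  | .inl i => fun x => (Pi.single i 1 : Fin d → ℝ) x.2
  | .inr q => fun x => planeRot q.1.1 q.1.2 (p x.1) x.2

theorem rigRow_dotProduct_trivialMotion [Fintype V] [DecidableEq V] (e : Sym2 V)
    (m : TrivialMotionIndex d) : rigRow d p e ⬝ᵥ trivialMotion p m = 0 := by
  induction e using Sym2.ind with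
  | _ a b =>
    rw [rigRow_dotProduct]
    cases m with
    | inl i => simp [trivialMotion]
    | inr q =>
      have : (fun i => planeRot q.1.1 q.1.2 (p a) i - planeRot q.1.1 q.1.2 (p b) i) =
          planeRot q.1.1 q.1.2 (p a - p b) := by
        ext i
        simp
      simp only [trivialMotion, this, dotProduct_planeRot_self]

theorem Generic.linearIndependent_trivialMotion [Fintype V] (hp : Generic d p)
    (hn : d + 1 ≤ Fintype.card V) : LinearIndependent ℝ (trivialMotion p) := by
  obtain ⟨w, u, hspan⟩ := hp.exists_span_sub_eq_top hn
  rw [Fintype.linearIndependent_iff]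
  intro c hc
  set L := ∑ q, c (.inr q) • planeRot q.1.1 q.1.2
  set t : Fin d → ℝ := fun i => c (.inl i)
  -- A vanishing combination moves every point `p v` by `t + L (p v)`; since the differences
  -- `p w - p (u j)` span, `L = 0`, and `L (Pi.single B 1) A` is the coefficient of `(A, B)`.
  have hval : ∀ v, t + L (p v) = 0 := fun v => funext fun j => by
    simpa [trivialMotion, Fintype.sum_sum_type, L, t, Pi.single_apply] using congrFun hc (v, j)
  have hL : L = 0 := LinearMap.ext_on_range hspan fun j => by
    simp [map_sub, eq_neg_of_add_eq_zero_right (hval w), eq_neg_of_add_eq_zero_right (hval (u j))]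
  have hrot : ∀ q, c (.inr q) = 0 := by
    rintro ⟨⟨A, B⟩, hAB⟩
    have hLB := congrFun (LinearMap.congr_fun hL (Pi.single B 1)) A
    simp only [L, LinearMap.sum_apply, LinearMap.smul_apply, planeRot_apply, Finset.sum_apply,
      Pi.smul_apply, Pi.sub_apply, smul_eq_mul] at hLB
    rw [Fintype.sum_eq_single ⟨(A, B), hAB⟩ fun q hq => ?_] at hLB
    · simpa [hAB.ne'] using hLB
    · obtain ⟨⟨A', B'⟩, h'⟩ := q
      have h₁ : ¬ (B' = B ∧ A = A') := fun h => hq (by simp [h.1, h.2])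
      have h₂ : ¬ (A' = B ∧ A = B') := fun h => lt_asymm hAB (by simpa [h.1, h.2] using h')
      simp only [Pi.single_apply]
      rw [ite_zero_mul_ite_zero, ite_zero_mul_ite_zero, if_neg h₁, if_neg h₂, sub_zero, mul_zero]
  have htrans : t = 0 := by simpa [hL] using hval w
  rintro (i | q)
  · exact congrFun htrans i
  · exact hrot q

end TrivialMotions

theorem finrank_span_add_finrank_span_le {ι : Type*} [Fintype ι] {s t : Set (ι → ℝ)}
    (h : ∀ x ∈ s, ∀ y ∈ t, x ⬝ᵥ y = 0) :
    Module.finrank ℝ (Submodule.span ℝ s) + Module.finrank ℝ (Submodule.span ℝ t) ≤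
      Fintype.card ι := by
  have horth : ∀ x ∈ Submodule.span ℝ s, ∀ y ∈ Submodule.span ℝ t, x ⬝ᵥ y = 0 := by
    intro x hx y hy
    induction hx using Submodule.span_induction with
    | mem x hx =>
      induction hy using Submodule.span_induction with
      | mem y hy => exact h x hx y hy
      | zero => simp
      | add _ _ _ _ h₁ h₂ => simp [dotProduct_add, h₁, h₂]
      | smul a _ _ h₁ => simp [dotProduct_smul, h₁]
    | zero => simp
    | add _ _ _ _ h₁ h₂ => simp [add_dotProduct, h₁, h₂]
    | smul a _ _ h₁ => simp [smul_dotProduct, h₁]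
  have hdisj : Disjoint (Submodule.span ℝ s) (Submodule.span ℝ t) :=
    Submodule.disjoint_def.2 fun x hs ht => dotProduct_self_eq_zero.1 (horth x hs x ht)
  simpa using Submodule.finrank_add_finrank_le_of_disjoint hdisj

theorem Generic.rrk_add_choose_two_le {V : Type*} [Fintype V] [DecidableEq V] {d : ℕ}
    {p : V → Fin d → ℝ} (hp : Generic d p) (hn : d + 1 ≤ Fintype.card V) (F : Set (Sym2 V)) :
    rrk d p F + (d + 1).choose 2 ≤ d * Fintype.card V := by
  have hK := finrank_span_eq_card (hp.linearIndependent_trivialMotion hn)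
  rw [card_trivialMotionIndex] at hK
  have := finrank_span_add_finrank_span_le (s := rigRow d p '' F)
    (t := Set.range (trivialMotion p))
    (by rintro _ ⟨e, -, rfl⟩ _ ⟨m, rfl⟩; exact rigRow_dotProduct_trivialMotion e m)
  rwa [hK, Fintype.card_prod, Fintype.card_fin, mul_comm] at this

section Degrees

variable {V : Type*} {D : Finset (Sym2 V)}

theorem edgeSet_fromEdgeSet_of_not_isDiag (hsimple : ∀ e ∈ D, ¬ e.IsDiag) :
    (fromEdgeSet (D : Set (Sym2 V))).edgeSet = D := by
  rw [edgeSet_fromEdgeSet, sdiff_eq_left, Set.disjoint_left]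
  exact fun e he hdiag => hsimple e he hdiag

variable [Fintype V] [DecidableEq V]

theorem degIn_eq_degree (hsimple : ∀ e ∈ D, ¬ e.IsDiag) (w : V) :
    degIn D w = (fromEdgeSet (D : Set (Sym2 V))).degree w := by
  rw [← card_incidenceFinset_eq_degree, degIn]
  congr 1
  ext e
  simp [incidenceSet, edgeSet_fromEdgeSet_of_not_isDiag hsimple]

theorem sum_degIn (hsimple : ∀ e ∈ D, ¬ e.IsDiag) : ∑ w, degIn D w = 2 * #D := by
  simp_rw [degIn_eq_degree hsimple, sum_degrees_eq_twice_card_edges]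
  congr
  ext e
  simp [edgeSet_fromEdgeSet_of_not_isDiag hsimple]

theorem degIn_lt_card (hsimple : ∀ e ∈ D, ¬ e.IsDiag) (w : V) : degIn D w < Fintype.card V := by
  rw [degIn_eq_degree hsimple]
  exact degree_lt_card_verts _

theorem exists_degIn_mul_card_le [Nonempty V] (hsimple : ∀ e ∈ D, ¬ e.IsDiag) :
    ∃ w, degIn D w * Fintype.card V ≤ 2 * #D := by
  obtain ⟨w, -, hw⟩ := exists_min_image univ (degIn D) univ_nonempty
  refine ⟨w, ?_⟩
  rw [← sum_degIn hsimple, mul_comm, ← smul_eq_mul, ← card_univ]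
  exact card_nsmul_le_sum _ _ _ fun v _ => hw v (mem_univ v)

end Degrees

section Circuits

variable {V : Type*} [Fintype V] [DecidableEq V] {d k : ℕ} {p : V → Fin d → ℝ}
  {D : Finset (Sym2 V)}

theorem IsKFoldCircuit.rigRow_mem_span (hD : IsKFoldCircuit d p D k) {f : Sym2 V} (hf : f ∈ D) :
    rigRow d p f ∈ Submodule.span ℝ (rigRow d p '' (↑D \ {f})) := by
  have hle : Submodule.span ℝ (rigRow d p '' (↑D \ {f})) ≤ Submodule.span ℝ (rigRow d p '' ↑D) :=
    Submodule.span_mono (Set.image_mono Set.sdiff_subset)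
  rw [Submodule.eq_of_le_of_finrank_eq hle (hD.1 f hf)]
  exact Submodule.subset_span ⟨f, hf, rfl⟩

theorem IsKFoldCircuit.succ_le_degIn (hp : Generic d p) (hD : IsKFoldCircuit d p D k)
    (hsimple : ∀ e ∈ D, ¬ e.IsDiag) {w : V} (hw : ∃ e ∈ D, w ∈ e) : d + 1 ≤ degIn D w := by
  set G := fromEdgeSet (D : Set (Sym2 V))
  have hadj : ∀ {u}, G.Adj w u ↔ s(w, u) ∈ D := fun {u} => by
    refine ⟨fun h => ((fromEdgeSet_adj _).1 h).1, fun h => (fromEdgeSet_adj _).2 ⟨h, ?_⟩⟩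
    rintro rfl
    exact hsimple _ h (Sym2.mk_isDiag_iff.2 rfl)
  rw [degIn_eq_degree hsimple, ← card_neighborFinset_eq_degree]
  by_contra! hlt
  obtain ⟨_, he, hwe⟩ := hw
  obtain ⟨u₀, rfl⟩ := Sym2.mem_iff_exists.1 hwe
  set N := G.neighborFinset w
  have hu₀ : u₀ ∈ N := (mem_neighborFinset _ _ _).2 (hadj.2 he)
  have hli := hp.linearIndependent_sub (u := ((↑) : N → V)) Subtype.val_injective
    (fun u => (G.ne_of_adj ((mem_neighborFinset _ _ _).1 u.2)).symm)
    (by simpa using Nat.le_of_lt_succ hlt)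
  apply hli.notMem_span_image (s := {u | u.1 ≠ u₀}) (x := ⟨u₀, hu₀⟩) (by simp)
  have hmem := Submodule.mem_map_of_mem (f := LinearMap.funLeft ℝ ℝ (Prod.mk w))
    (hD.rigRow_mem_span he)
  rw [Submodule.map_span, funLeft_rigRow_mk (G.ne_of_adj (hadj.2 he)).symm] at hmem
  refine Submodule.span_le.2 ?_ hmem
  rintro _ ⟨_, ⟨e, ⟨heD, hne⟩, rfl⟩, rfl⟩
  by_cases hwe : w ∈ e
  · obtain ⟨u, rfl⟩ := Sym2.mem_iff_exists.1 hwe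
    have hu : u ∈ N := (mem_neighborFinset _ _ _).2 (hadj.2 heD)
    refine Submodule.subset_span ⟨⟨u, hu⟩, fun h => hne (congrArg (fun x => s(w, x)) h), ?_⟩
    simp [funLeft_rigRow_mk (G.ne_of_adj (hadj.2 heD)).symm]
  · rw [funLeft_rigRow_of_notMem hwe]
    exact Submodule.zero_mem _

end Circuits

theorem kfold_circuit_edge_count_and_degree_general
    (d k : ℕ) (hk : 1 ≤ k)
    {V : Type*} [Fintype V] [DecidableEq V]
    (D : Finset (Sym2 V)) (hsimple : ∀ e ∈ D, ¬ e.IsDiag)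
    (hcov : ∀ w : V, ∃ e ∈ D, w ∈ e)
    (p : V → Fin d → ℝ) (hp : Generic d p)
    (hD : IsKFoldCircuit d p D k) :
    ((D.card : ℤ) ≤ (d : ℤ) * (Fintype.card V : ℤ) - ((d+1).choose 2 : ℤ) + (k : ℤ)) ∧
    (((D.card : ℤ) = (d : ℤ) * (Fintype.card V : ℤ) - ((d+1).choose 2 : ℤ) + (k : ℤ)) ↔
        IsRigidOn d p Finset.univ D) ∧
    (∀ w : V, d + 1 ≤ degIn D w) ∧
    (∃ w : V, (degIn D w : ℚ) ≤
        2 * (d : ℚ) + (2 * (k : ℚ) - (d : ℚ) * ((d : ℚ) + 1)) / (Fintype.card V : ℚ)) := by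
  have hdeg : ∀ w, d + 1 ≤ degIn D w := fun w => hD.succ_le_degIn hp hsimple (hcov w)
  have hcard : rrk d p ↑D + k = #D := hD.2
  have : Nonempty V := by
    obtain ⟨e, -⟩ : D.Nonempty := card_pos.1 (by omega)
    exact e.inductionOn fun a _ => ⟨a⟩
  have hn : d + 2 ≤ Fintype.card V :=
    (hdeg (Classical.arbitrary V)).trans_lt (degIn_lt_card hsimple _)
  have hrank := hp.rrk_add_choose_two_le (by omega) (D : Set (Sym2 V))
  obtain ⟨w, hw⟩ := exists_degIn_mul_card_le hsimple
  refine ⟨by zify at hcard hrank; linarith, ?_, hdeg, w, ?_⟩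
  · rw [IsRigidOn, card_univ, or_iff_right fun h => by have := h.1; omega]
    zify at hcard
    constructor <;> intro h <;> linarith
  · have hC : (((d + 1).choose 2 : ℕ) : ℚ) * 2 = (d + 1) * d := by
      rw [Nat.cast_choose_two]; push_cast; ring
    rw [← sub_le_iff_le_add', le_div_iff₀ (by exact_mod_cast (by omega : 0 < Fintype.card V))]
    qify at hcard hrank hw
    nlinarith

/-- Lemma 3.1: edge count and minimum-degree bounds for `k`-fold `R_d`-circuits. -/
theorem kfold_circuit_edge_count_and_degree
    (d k : ℕ) (hd : 1 ≤ d) (hk : 1 ≤ k)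
    {V : Type*} [Fintype V] [DecidableEq V]
    (D : Finset (Sym2 V)) (hsimple : ∀ e ∈ D, ¬ e.IsDiag)
    (hcov : ∀ w : V, ∃ e ∈ D, w ∈ e)
    (p : V → Fin d → ℝ) (hp : Generic d p)
    (hD : IsKFoldCircuit d p D k) :
    ((D.card : ℤ) ≤ (d : ℤ) * (Fintype.card V : ℤ) - ((d+1).choose 2 : ℤ) + (k : ℤ)) ∧
    (((D.card : ℤ) = (d : ℤ) * (Fintype.card V : ℤ) - ((d+1).choose 2 : ℤ) + (k : ℤ)) ↔
        IsRigidOn d p Finset.univ D) ∧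
    (∀ w : V, d + 1 ≤ degIn D w) ∧
    (∃ w : V, (degIn D w : ℚ) ≤
        2 * (d : ℚ) + (2 * (k : ℚ) - (d : ℚ) * ((d : ℚ) + 1)) / (Fintype.card V : ℚ)) :=
  kfold_circuit_edge_count_and_degree_general d k hk D hsimple hcov p hp hD
end

section
/- Let d ≥ 1 and let G be the graphical 2-sum of graphs G1=(V1,E1) and G2=(V2,E2) along an edge e, i.e., V1 ∩ V2 = {u,w}, E1 ∩ E2 = {uw} = {e}, and G = (G1 ∪ G2) − e. Suppose that r_d(Ei ∖ {e}) = r_d(Ei) for i = 1,2 (e is not a coloop of the rigidity matroid of Gi). Then E(G) = (E1 ∪ E2) ∖ {e} is a k-fold R_d-circuit if and only if there exist nonnegative integers k1, k2 such that Ei is a ki-fold R_d-circuit for i = 1,2 and k1 + k2 = k + 1. -/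
open scoped BigOperators

section Aux
variable {V : Type*} [Fintype V] [DecidableEq V]

lemma rigRow_apply (d : ℕ) (p : V → Fin d → ℝ) (a b : V) (vi : V × Fin d) :
    rigRow d p s(a,b) vi
      = ((if vi.1 = a then (1:ℝ) else 0) - (if vi.1 = b then 1 else 0)) * (p a vi.2 - p b vi.2) :=
  rfl

noncomputable def sumCoord (d : ℕ) (V : Type*) [Fintype V] (i : Fin d) :
    ((V × Fin d) → ℝ) →ₗ[ℝ] ℝ where
  toFun x := ∑ v, x (v, i)
  map_add' x y := by simp [Finset.sum_add_distrib]
  map_smul' c x := by simp [Finset.mul_sum]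

noncomputable def rotCoord (d : ℕ) {V : Type*} [Fintype V] (p : V → Fin d → ℝ) (i j : Fin d) :
    ((V × Fin d) → ℝ) →ₗ[ℝ] ℝ where
  toFun x := ∑ v, (x (v, i) * p v j - x (v, j) * p v i)
  map_add' x y := by
    simp only [Pi.add_apply]
    rw [← Finset.sum_add_distrib]
    congr 1; funext v; ring
  map_smul' c x := by
    simp only [Pi.smul_apply, smul_eq_mul, RingHom.id_apply]
    rw [Finset.mul_sum]
    congr 1; funext v; ring

lemma sumCoord_rigRow (d : ℕ) (p : V → Fin d → ℝ) (a b : V) (i : Fin d) :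
    sumCoord d V i (rigRow d p s(a,b)) = 0 := by
  simp only [sumCoord, LinearMap.coe_mk, AddHom.coe_mk, rigRow_apply]
  simp [sub_mul, Finset.sum_sub_distrib, ite_mul, Finset.sum_ite_eq']

lemma rotCoord_rigRow (d : ℕ) (p : V → Fin d → ℝ) (a b : V) (i j : Fin d) :
    rotCoord d p i j (rigRow d p s(a,b)) = 0 := by
  simp only [rotCoord, LinearMap.coe_mk, AddHom.coe_mk, rigRow_apply]
  have : ∀ v, ((if v = a then (1:ℝ) else 0) - if v = b then 1 else 0) * (p a i - p b i) * p v j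
      - ((if v = a then (1:ℝ) else 0) - if v = b then 1 else 0) * (p a j - p b j) * p v i
      = (if v = a then ((p a i - p b i) * p v j - (p a j - p b j) * p v i) else 0)
      - (if v = b then ((p a i - p b i) * p v j - (p a j - p b j) * p v i) else 0) := by
    intro v; split <;> split <;> ring
  simp only [this, Finset.sum_sub_distrib, Finset.sum_ite_eq', Finset.mem_univ, if_true]
  ring

lemma sumCoord_eq_zero (d : ℕ) (p : V → Fin d → ℝ) (F : Set (Sym2 V)) {x}
    (hx : x ∈ Submodule.span ℝ (rigRow d p '' F)) (i : Fin d) : sumCoord d V i x = 0 := by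
  have h : Submodule.span ℝ (rigRow d p '' F) ≤ LinearMap.ker (sumCoord d V i) := by
    rw [Submodule.span_le]
    rintro _ ⟨f, _, rfl⟩
    induction f using Sym2.inductionOn with
    | hf a b => exact LinearMap.mem_ker.2 (sumCoord_rigRow d p a b i)
  exact LinearMap.mem_ker.1 (h hx)

lemma rotCoord_eq_zero (d : ℕ) (p : V → Fin d → ℝ) (F : Set (Sym2 V)) {x}
    (hx : x ∈ Submodule.span ℝ (rigRow d p '' F)) (i j : Fin d) : rotCoord d p i j x = 0 := by
  have h : Submodule.span ℝ (rigRow d p '' F) ≤ LinearMap.ker (rotCoord d p i j) := by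
    rw [Submodule.span_le]
    rintro _ ⟨f, _, rfl⟩
    induction f using Sym2.inductionOn with
    | hf a b => exact LinearMap.mem_ker.2 (rotCoord_rigRow d p a b i j)
  exact LinearMap.mem_ker.1 (h hx)

lemma supp_eq_zero (d : ℕ) (p : V → Fin d → ℝ) (F : Set (Sym2 V)) (W : Finset V)
    (hF : ∀ f ∈ F, ∀ y ∈ f, y ∈ W) {x}
    (hx : x ∈ Submodule.span ℝ (rigRow d p '' F)) (v : V) (hv : v ∉ W) (i : Fin d) :
    x (v, i) = 0 := by
  have h : Submodule.span ℝ (rigRow d p '' F) ≤ LinearMap.ker (LinearMap.proj (R := ℝ)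
      (φ := fun _ : V × Fin d => ℝ) (v, i)) := by
    rw [Submodule.span_le]
    rintro _ ⟨f, hf, rfl⟩
    induction f using Sym2.inductionOn with
    | hf a b =>
      have ha : a ∈ W := hF _ hf a (Sym2.mem_mk_left a b)
      have hb : b ∈ W := hF _ hf b (Sym2.mem_mk_right a b)
      have hva : v ≠ a := fun h => hv (h ▸ ha)
      have hvb : v ≠ b := fun h => hv (h ▸ hb)
      refine LinearMap.mem_ker.2 ?_
      simp [LinearMap.proj, rigRow_apply, hva, hvb]
  exact LinearMap.mem_ker.1 (h hx)

end Aux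

section Main
variable {V : Type*} [Fintype V] [DecidableEq V]

set_option linter.unusedSectionVars false

lemma span_inter (d : ℕ) (hd : 1 ≤ d) (p : V → Fin d → ℝ) (hp : Generic d p)
    (V1 V2 : Finset V) (E1 E2 : Finset (Sym2 V)) (u w : V) (huw : u ≠ w)
    (hV12 : V1 ∩ V2 = {u, w})
    (hE1 : ∀ e ∈ E1, ¬ e.IsDiag ∧ ∀ x ∈ e, x ∈ V1)
    (hE2 : ∀ e ∈ E2, ¬ e.IsDiag ∧ ∀ x ∈ e, x ∈ V2)
    (he1 : s(u,w) ∈ E1) (he2 : s(u,w) ∈ E2) :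
    Submodule.span ℝ (rigRow d p '' ↑E1) ⊓ Submodule.span ℝ (rigRow d p '' ↑E2)
      = Submodule.span ℝ {rigRow d p s(u,w)} := by
  have hq : ∀ i, p u i - p w i ≠ 0 := by
    intro i h
    exact huw (congrArg Prod.fst (hp.injective (a₁ := (u,i)) (a₂ := (w,i)) (by
      simpa using sub_eq_zero.1 h)))
  apply le_antisymm
  · rintro x hx
    obtain ⟨hx1, hx2⟩ := Submodule.mem_inf.1 hx
    -- support
    have hsupp : ∀ v, v ≠ u → v ≠ w → ∀ i, x (v, i) = 0 := by
      intro v hvu hvw i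
      have hv : v ∉ V1 ∩ V2 := by rw [hV12]; simp [hvu, hvw]
      rcases (by by_contra hcon; push_neg at hcon; exact hv (Finset.mem_inter.2 hcon) : v ∉ V1 ∨ v ∉ V2) with h | h
      · exact supp_eq_zero d p ↑E1 V1 (fun f hf => (hE1 f hf).2) hx1 v h i
      · exact supp_eq_zero d p ↑E2 V2 (fun f hf => (hE2 f hf).2) hx2 v h i
    -- pair-sum reduction
    have hpair : ∀ g : V → ℝ, (∀ v, v ≠ u → v ≠ w → g v = 0) → ∑ v, g v = g u + g w := by
      intro g hg
      rw [← Finset.sum_subset (Finset.subset_univ {u, w})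
        (fun v _ hv => hg v (fun h => hv (by simp [h])) (fun h => hv (by simp [h])))]
      exact Finset.sum_pair huw
    have hbal : ∀ i, x (w, i) = - x (u, i) := by
      intro i
      have h0 := sumCoord_eq_zero d p ↑E1 hx1 i
      simp only [sumCoord, LinearMap.coe_mk, AddHom.coe_mk] at h0
      rw [hpair _ (fun v h1 h2 => hsupp v h1 h2 i)] at h0
      linarith
    have hrot : ∀ i j, x (u, i) * (p u j - p w j) = x (u, j) * (p u i - p w i) := by
      intro i j
      have h0 := rotCoord_eq_zero d p ↑E1 hx1 i j
      simp only [rotCoord, LinearMap.coe_mk, AddHom.coe_mk] at h0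
      rw [hpair _ (fun v h1 h2 => by rw [hsupp v h1 h2 i, hsupp v h1 h2 j]; ring)] at h0
      rw [hbal i, hbal j] at h0
      linarith [h0]
    set i0 : Fin d := ⟨0, hd⟩
    set c : ℝ := x (u, i0) / (p u i0 - p w i0) with hc
    refine Submodule.mem_span_singleton.2 ⟨c, ?_⟩
    funext vi
    obtain ⟨v, i⟩ := vi
    have hval : x (u, i) = c * (p u i - p w i) := by
      rw [hc, div_mul_eq_mul_div, eq_div_iff (hq i0)]
      rw [mul_comm] at *
      exact (hrot i i0).symm ▸ by linarith [hrot i i0]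
    by_cases hvu : v = u
    · subst hvu
      have hrow : rigRow d p s(v,w) (v, i) = p v i - p w i := by
        rw [rigRow_apply, if_pos rfl, if_neg huw]; ring
      rw [Pi.smul_apply, smul_eq_mul, hrow, hval]
    · by_cases hvw : v = w
      · subst hvw
        have hrow : rigRow d p s(u,v) (v, i) = -(p u i - p v i) := by
          rw [rigRow_apply, if_pos rfl, if_neg hvu]; ring
        rw [Pi.smul_apply, smul_eq_mul, hrow, hbal i, hval]
        ring
      · have hrow : rigRow d p s(u,w) (v, i) = 0 := by
          norm_num [rigRow_apply, hvu, hvw]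
        rw [Pi.smul_apply, smul_eq_mul, hrow, hsupp v hvu hvw i, mul_zero]
  · rw [Submodule.span_le, Set.singleton_subset_iff]
    exact Submodule.mem_inf.2
      ⟨Submodule.subset_span ⟨_, by simpa using he1, rfl⟩,
       Submodule.subset_span ⟨_, by simpa using he2, rfl⟩⟩

end Main

section Main2
variable {V : Type*} [Fintype V] [DecidableEq V]

set_option linter.unusedSectionVars false

lemma rrk_le_card (d : ℕ) (p : V → Fin d → ℝ) (F : Finset (Sym2 V)) :
    rrk d p ↑F ≤ F.card := by
  unfold rrk
  rw [← Finset.coe_image]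
  exact le_trans (finrank_span_finset_le_card _) Finset.card_image_le

lemma keyLemma (d : ℕ) (hd : 1 ≤ d)
    (V1 V2 : Finset V) (E1 E2 : Finset (Sym2 V)) (u w : V) (huw : u ≠ w)
    (hV12 : V1 ∩ V2 = {u, w})
    (hE1 : ∀ e ∈ E1, ¬ e.IsDiag ∧ ∀ x ∈ e, x ∈ V1)
    (hE2 : ∀ e ∈ E2, ¬ e.IsDiag ∧ ∀ x ∈ e, x ∈ V2)
    (hE12 : E1 ∩ E2 = {s(u, w)})
    (p : V → Fin d → ℝ) (hp : Generic d p)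
    (hcoloop1 : rrk d p ↑(E1.erase (s(u, w))) = rrk d p ↑E1)
    (hcoloop2 : rrk d p ↑(E2.erase (s(u, w))) = rrk d p ↑E2) :
    rrk d p ↑((E1 ∪ E2).erase s(u,w)) + 1 = rrk d p ↑E1 + rrk d p ↑E2 ∧
    ∀ f ∈ E1, f ≠ s(u,w) →
      rrk d p ↑(((E1 ∪ E2).erase s(u,w)).erase f) + 1
        = rrk d p ↑(E1.erase f) + rrk d p ↑E2 := by
  set e := s(u,w) with he
  have he1 : e ∈ E1 := by
    have : e ∈ E1 ∩ E2 := by rw [hE12]; exact Finset.mem_singleton_self _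
    exact (Finset.mem_inter.1 this).1
  have he2 : e ∈ E2 := by
    have : e ∈ E1 ∩ E2 := by rw [hE12]; exact Finset.mem_singleton_self _
    exact (Finset.mem_inter.1 this).2
  have hq0 : p u ⟨0, hd⟩ - p w ⟨0, hd⟩ ≠ 0 := by
    intro h
    exact huw (congrArg Prod.fst (hp.injective (a₁ := (u,⟨0,hd⟩)) (a₂ := (w,⟨0,hd⟩)) (by
      simpa using sub_eq_zero.1 h)))
  have hrowne : rigRow d p e ≠ 0 := by
    intro h
    have := congrFun h (u, ⟨0, hd⟩)
    rw [he, rigRow_apply, if_pos rfl, if_neg huw] at this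
    simp only [Pi.zero_apply] at this
    exact hq0 (by linarith [this])
  have hrow1 : Module.finrank ℝ (Submodule.span ℝ {rigRow d p e}) = 1 :=
    finrank_span_singleton hrowne
  have hint : Submodule.span ℝ (rigRow d p '' ↑E1) ⊓ Submodule.span ℝ (rigRow d p '' ↑E2)
      = Submodule.span ℝ {rigRow d p e} :=
    span_inter d hd p hp V1 V2 E1 E2 u w huw hV12 hE1 hE2 he1 he2
  have hspan1 : Submodule.span ℝ (rigRow d p '' ↑(E1.erase e))
      = Submodule.span ℝ (rigRow d p '' ↑E1) := by
    refine Submodule.eq_of_le_of_finrank_eq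
      (Submodule.span_mono (Set.image_mono (Finset.coe_subset.2 (Finset.erase_subset _ _))))
      hcoloop1
  have hspan2 : Submodule.span ℝ (rigRow d p '' ↑(E2.erase e))
      = Submodule.span ℝ (rigRow d p '' ↑E2) := by
    refine Submodule.eq_of_le_of_finrank_eq
      (Submodule.span_mono (Set.image_mono (Finset.coe_subset.2 (Finset.erase_subset _ _))))
      hcoloop2
  have hrowe2 : rigRow d p e ∈ Submodule.span ℝ (rigRow d p '' ↑(E2.erase e)) := by
    rw [hspan2]; exact Submodule.subset_span ⟨e, by simpa using he2, rfl⟩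
  have hsup : ∀ (A B : Finset (Sym2 V)),
      Submodule.span ℝ (rigRow d p '' ↑(A ∪ B))
        = Submodule.span ℝ (rigRow d p '' ↑A) ⊔ Submodule.span ℝ (rigRow d p '' ↑B) := by
    intro A B
    rw [Finset.coe_union, Set.image_union, Submodule.span_union]
  have hSE : Submodule.span ℝ (rigRow d p '' ↑((E1 ∪ E2).erase e))
      = Submodule.span ℝ (rigRow d p '' ↑E1) ⊔ Submodule.span ℝ (rigRow d p '' ↑E2) := by
    apply le_antisymm
    · refine le_trans (Submodule.span_mono (Set.image_mono
        (Finset.coe_subset.2 (Finset.erase_subset _ _)))) ?_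
      rw [hsup]
    · refine sup_le ?_ ?_
      · rw [← hspan1]
        exact Submodule.span_mono (Set.image_mono (Finset.coe_subset.2
          (Finset.erase_subset_erase _ Finset.subset_union_left)))
      · rw [← hspan2]
        exact Submodule.span_mono (Set.image_mono (Finset.coe_subset.2
          (Finset.erase_subset_erase _ Finset.subset_union_right)))
  constructor
  · have h := Submodule.finrank_sup_add_finrank_inf_eq
      (Submodule.span ℝ (rigRow d p '' ↑E1)) (Submodule.span ℝ (rigRow d p '' ↑E2))
    rw [hint, hrow1] at h
    unfold rrk
    rw [hSE]
    exact h
  · intro f hf hne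
    have hf2 : f ∉ E2 := by
      intro h
      exact hne (Finset.mem_singleton.1 (hE12 ▸ Finset.mem_inter.2 ⟨hf, h⟩))
    have hS2 : Submodule.span ℝ (rigRow d p '' ↑(((E1 ∪ E2).erase e).erase f))
        = Submodule.span ℝ (rigRow d p '' ↑(E1.erase f))
          ⊔ Submodule.span ℝ (rigRow d p '' ↑E2) := by
      apply le_antisymm
      · rw [← hsup]
        refine Submodule.span_mono (Set.image_mono (Finset.coe_subset.2 ?_))
        intro g hg
        simp only [Finset.mem_erase, Finset.mem_union] at hg
        rcases hg with ⟨hgf, hge, hg1 | hg2⟩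
        · exact Finset.mem_union_left _ (Finset.mem_erase.2 ⟨hgf, hg1⟩)
        · exact Finset.mem_union_right _ hg2
      · have hE2le : Submodule.span ℝ (rigRow d p '' ↑E2)
            ≤ Submodule.span ℝ (rigRow d p '' ↑(((E1 ∪ E2).erase e).erase f)) := by
          rw [← hspan2]
          refine Submodule.span_mono (Set.image_mono (Finset.coe_subset.2 ?_))
          intro g hg
          rw [Finset.mem_erase] at hg
          refine Finset.mem_erase.2 ⟨fun h => hf2 (h ▸ hg.2), Finset.mem_erase.2
            ⟨hg.1, Finset.mem_union_right _ hg.2⟩⟩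
        refine sup_le ?_ hE2le
        rw [Submodule.span_le]
        rintro _ ⟨g, hg, rfl⟩
        rw [Finset.mem_coe, Finset.mem_erase] at hg
        by_cases hge : g = e
        · subst hge
          exact hE2le (by rw [← hspan2]; exact hrowe2)
        · exact Submodule.subset_span ⟨g, by
            simp only [Finset.coe_erase, Set.mem_diff, Finset.mem_coe, Finset.mem_union,
              Set.mem_singleton_iff]
            exact ⟨⟨Or.inl hg.2, hge⟩, hg.1⟩, rfl⟩
    have hint' : Submodule.span ℝ (rigRow d p '' ↑(E1.erase f))
        ⊓ Submodule.span ℝ (rigRow d p '' ↑E2) = Submodule.span ℝ {rigRow d p e} := by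
      apply le_antisymm
      · rw [← hint]
        exact inf_le_inf_right _ (Submodule.span_mono (Set.image_mono
          (Finset.coe_subset.2 (Finset.erase_subset _ _))))
      · rw [Submodule.span_le, Set.singleton_subset_iff]
        refine Submodule.mem_inf.2 ⟨Submodule.subset_span ⟨e, ?_, rfl⟩,
          Submodule.subset_span ⟨e, by simpa using he2, rfl⟩⟩
        simp only [Finset.coe_erase, Set.mem_diff, Finset.mem_coe, Set.mem_singleton_iff]
        exact ⟨he1, fun h => hne h.symm⟩
    have h := Submodule.finrank_sup_add_finrank_inf_eq
      (Submodule.span ℝ (rigRow d p '' ↑(E1.erase f))) (Submodule.span ℝ (rigRow d p '' ↑E2))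
    rw [hint', hrow1] at h
    unfold rrk
    rw [hS2]
    exact h

end Main2


/-- Lemma 3.6: graphical 2-sums of `k`-fold `R_d`-circuits. -/
theorem graphical_two_sum_kfold (k : ℕ)
    (d : ℕ) (hd : 1 ≤ d) {V : Type*} [Fintype V] [DecidableEq V]
    (V1 V2 : Finset V) (E1 E2 : Finset (Sym2 V)) (u w : V) (huw : u ≠ w)
    (hV12 : V1 ∩ V2 = {u, w})
    (hE1 : ∀ e ∈ E1, ¬ e.IsDiag ∧ ∀ x ∈ e, x ∈ V1)
    (hE2 : ∀ e ∈ E2, ¬ e.IsDiag ∧ ∀ x ∈ e, x ∈ V2)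
    (hE12 : E1 ∩ E2 = {s(u, w)})
    (p : V → Fin d → ℝ) (hp : Generic d p)
    (hcoloop1 : rrk d p ↑(E1.erase (s(u, w))) = rrk d p ↑E1)
    (hcoloop2 : rrk d p ↑(E2.erase (s(u, w))) = rrk d p ↑E2) :
    IsKFoldCircuit d p ((E1 ∪ E2).erase (s(u, w))) k ↔
      ∃ k1 k2 : ℕ, IsKFoldCircuit d p E1 k1 ∧ IsKFoldCircuit d p E2 k2 ∧
        k1 + k2 = k + 1 := by
  classical
  obtain ⟨key1, hiff1⟩ := keyLemma d hd V1 V2 E1 E2 u w huw hV12 hE1 hE2 hE12 p hp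
    hcoloop1 hcoloop2
  obtain ⟨-, hiff2⟩ := keyLemma d hd V2 V1 E2 E1 u w huw
    (by rw [Finset.inter_comm]; exact hV12) hE2 hE1
    (by rw [Finset.inter_comm]; exact hE12) p hp hcoloop2 hcoloop1
  rw [Finset.union_comm E2 E1] at hiff2
  have he1 : s(u,w) ∈ E1 := by
    have : s(u,w) ∈ E1 ∩ E2 := by rw [hE12]; exact Finset.mem_singleton_self _
    exact (Finset.mem_inter.1 this).1
  have hcard : (E1 ∪ E2).card + 1 = E1.card + E2.card := by
    have h := Finset.card_union_add_card_inter E1 E2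
    rw [hE12, Finset.card_singleton] at h
    exact h
  have hcardE : ((E1 ∪ E2).erase (s(u,w))).card + 1 = (E1 ∪ E2).card :=
    Finset.card_erase_add_one (Finset.mem_union_left _ he1)
  have hle1 := rrk_le_card d p E1
  have hle2 := rrk_le_card d p E2
  constructor
  · rintro ⟨hcol, hc⟩
    refine ⟨E1.card - rrk d p ↑E1, E2.card - rrk d p ↑E2, ⟨?_, by omega⟩, ⟨?_, by omega⟩,
      by omega⟩
    · intro f hf
      rw [← Finset.coe_erase]
      by_cases hfe : f = s(u,w)
      · subst hfe; exact hcoloop1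
      · have h := hcol f (Finset.mem_erase.2 ⟨hfe, Finset.mem_union_left _ hf⟩)
        rw [← Finset.coe_erase] at h
        have h2 := hiff1 f hf hfe
        omega
    · intro f hf
      rw [← Finset.coe_erase]
      by_cases hfe : f = s(u,w)
      · subst hfe; exact hcoloop2
      · have h := hcol f (Finset.mem_erase.2 ⟨hfe, Finset.mem_union_right _ hf⟩)
        rw [← Finset.coe_erase] at h
        have h2 := hiff2 f hf hfe
        omega
  · rintro ⟨k1, k2, ⟨h1col, h1c⟩, ⟨h2col, h2c⟩, hk⟩
    constructor
    · intro f hf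
      obtain ⟨hfe, hfu⟩ := Finset.mem_erase.1 hf
      rw [← Finset.coe_erase]
      rcases Finset.mem_union.1 hfu with hf1 | hf2
      · have h := h1col f hf1
        rw [← Finset.coe_erase] at h
        have h2 := hiff1 f hf1 hfe
        omega
      · have h := h2col f hf2
        rw [← Finset.coe_erase] at h
        have h2 := hiff2 f hf2 hfe
        omega
    · omega
end

section
/- Let d ≥ 1 and k ≥ 1, and let G = (V,D) be a graph with no isolated vertices whose edge set D is a k-fold R_d-circuit having at most one technicolour vertex. Then D is a trivial k-fold R_d-circuit, i.e., its principal partition has exactly k parts. -/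
open scoped BigOperators

/-!
Let `Z` be the space of self-stresses of `D`, of dimension `k`. The parts of the principal
partition are the classes of the relation `f ~ g ↔ {ω ∈ Z | ω f = 0} = {ω ∈ Z | ω g = 0}`, so
evaluation at one representative edge per part is an injective map `Z → ℝ^parts`. It is also
surjective once every part `A` carries a self-stress that is nonzero on `A`: restricting a
stress to `A` gives such a stress when `A` splits the edges at no vertex but one, and a part
can only split the edges at a technicolour vertex.
-/

open Module Submodule

section Relations

variable (K : Type*) {M ι : Type*} [Field K] [AddCommGroup M] [Module K M]

/-- For the rows of a rigidity matrix these are the self-stresses supported on `F`. -/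
noncomputable def relationsOn (v : ι → M) (F : Set ι) : Submodule K (ι →₀ K) :=
  Finsupp.supported K K F ⊓ LinearMap.ker (Finsupp.linearCombination K v)

variable {K} {v : ι → M}

theorem mem_relationsOn {F : Set ι} {ω : ι →₀ K} :
    ω ∈ relationsOn K v F ↔ (∀ i ∉ F, ω i = 0) ∧ Finsupp.linearCombination K v ω = 0 := by
  rw [relationsOn, Submodule.mem_inf, Finsupp.mem_supported', LinearMap.mem_ker]

theorem relationsOn_mono {F G : Set ι} (h : F ⊆ G) : relationsOn K v F ≤ relationsOn K v G :=
  inf_le_inf_right _ (Finsupp.supported_mono h)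

theorem mem_relationsOn_diff_singleton {F : Set ι} {i : ι} {ω : ι →₀ K} :
    ω ∈ relationsOn K v (F \ {i}) ↔ ω ∈ relationsOn K v F ∧ ω i = 0 := by
  simp only [mem_relationsOn, Set.mem_sdiff, Set.mem_singleton_iff, not_and_or, not_not]
  constructor
  · rintro ⟨hsupp, hlc⟩
    exact ⟨⟨fun j hj => hsupp j (Or.inl hj), hlc⟩, hsupp i (Or.inr rfl)⟩
  · rintro ⟨⟨hsupp, hlc⟩, hi⟩
    exact ⟨fun j hj => hj.elim (hsupp j) (fun hji => hji ▸ hi), hlc⟩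

theorem finrank_relationsOn_add_finrank_span (F : Finset ι) :
    finrank K (relationsOn K v F) + finrank K (span K (v '' F)) = F.card := by
  let S := Finsupp.supported K K (F : Set ι)
  have hS : S ≃ₗ[K] (F →₀ K) := Finsupp.supportedEquivFinsupp (F : Set ι)
  have : Module.Finite K S := Module.Finite.equiv hS.symm
  let φ := (Finsupp.linearCombination K v).domRestrict S
  have hrange : LinearMap.range φ = span K (v '' F) := by
    rw [LinearMap.range_domRestrict, Finsupp.span_image_eq_map_linearCombination]
  have hker : finrank K (LinearMap.ker φ) = finrank K (relationsOn K v F) := by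
    rw [LinearMap.ker_domRestrict, ← Submodule.finrank_map_subtype_eq,
      Submodule.map_comap_subtype, relationsOn]
  rw [← hker, ← hrange, add_comm, LinearMap.finrank_range_add_finrank_ker (V := S) φ,
    hS.finrank_eq, finrank_finsupp_self, Fintype.card_coe]

variable [Finite ι]

theorem finrank_relationsOn_diff_singleton_add_one_iff {F : Set ι} {i : ι} :
    finrank K (relationsOn K v (F \ {i})) + 1 = finrank K (relationsOn K v F) ↔
      ∃ ω ∈ relationsOn K v F, ω i ≠ 0 := by
  constructor
  · intro h
    by_contra! hzero
    have : relationsOn K v (F \ {i}) = relationsOn K v F :=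
      le_antisymm (relationsOn_mono Set.sdiff_subset)
        fun ω hω => mem_relationsOn_diff_singleton.2 ⟨hω, hzero ω hω⟩
    rw [this] at h
    omega
  · rintro ⟨ω, hω, hωi⟩
    let eval : Module.Dual K (relationsOn K v F) := (Finsupp.lapply i).domRestrict _
    have heval : eval ≠ 0 := fun h => hωi (LinearMap.congr_fun h ⟨ω, hω⟩)
    have hker : LinearMap.ker eval = (relationsOn K v (F \ {i})).comap (Submodule.subtype _) := by
      ext ⟨ω', hω'⟩
      simp [eval, mem_relationsOn_diff_singleton, hω']
    rw [← Dual.finrank_ker_add_one_of_ne_zero (V₁ := relationsOn K v F) heval, hker,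
      ← finrank_map_subtype_eq, map_comap_subtype,
      inf_eq_right.2 (relationsOn_mono Set.sdiff_subset)]

end Relations

section PrincipalPartition

variable (K : Type*) {M ι : Type*} [Field K] [AddCommGroup M] [Module K M]

open Classical in
/-- For a `k`-fold circuit `D` this is the part of the principal partition containing `f`
(`isPrincipalPart_iff`); `g` lies in it iff
`relationsOn K v (D \ {f}) = relationsOn K v (D \ {g})`. -/
noncomputable def principalPart (v : ι → M) (D : Finset ι) (f : ι) : Finset ι :=
  {g ∈ D | ∀ ω ∈ relationsOn K v (↑D \ {f}), ω g = 0}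

variable {K} {v : ι → M} {D : Finset ι} {f g : ι}

theorem mem_principalPart :
    g ∈ principalPart K v D f ↔ g ∈ D ∧ ∀ ω ∈ relationsOn K v (↑D \ {f}), ω g = 0 := by
  simp only [principalPart, Finset.mem_filter]

theorem principalPart_subset : principalPart K v D f ⊆ D :=
  fun _ hg => (mem_principalPart.1 hg).1

theorem mem_principalPart_self (hf : f ∈ D) : f ∈ principalPart K v D f :=
  mem_principalPart.2 ⟨hf, fun _ hω => (mem_relationsOn_diff_singleton.1 hω).2⟩

theorem relationsOn_sdiff_principalPart [DecidableEq ι] (hf : f ∈ D) :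
    relationsOn K v ↑(D \ principalPart K v D f) = relationsOn K v (↑D \ {f}) := by
  refine le_antisymm (relationsOn_mono ?_) fun ω hω => mem_relationsOn.2 ⟨fun g hg => ?_, ?_⟩
  · intro g hg
    rw [Finset.coe_sdiff] at hg
    exact ⟨hg.1, fun hgf : g = f => hg.2 (by rw [hgf]; exact mem_principalPart_self hf)⟩
  · by_cases hgD : g ∈ D
    · exact (mem_principalPart.1 (by simpa [hgD] using hg)).2 ω hω
    · exact (mem_relationsOn.1 hω).1 g (by simp [hgD])
  · exact (mem_relationsOn.1 hω).2

theorem eq_zero_of_image_principalPart_eq [DecidableEq ι] {T : Finset ι}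
    (hT : T.image (principalPart K v D) = D.image (principalPart K v D)) {ω : ι →₀ K}
    (hω : ω ∈ relationsOn K v ↑D) (hωT : ∀ t ∈ T, ω t = 0) : ω = 0 := by
  ext g
  by_cases hgD : g ∈ D
  · obtain ⟨t, htT, hpart⟩ := Finset.mem_image.1 (hT ▸ Finset.mem_image_of_mem _ hgD)
    have hgt : g ∈ principalPart K v D t := hpart ▸ mem_principalPart_self hgD
    exact (mem_principalPart.1 hgt).2 ω
      (mem_relationsOn_diff_singleton.2 ⟨hω, hωT t htT⟩)
  · exact (mem_relationsOn.1 hω).1 g hgD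

variable [Finite ι] (hD : ∀ f ∈ D, ∃ ω ∈ relationsOn K v ↑D, ω f ≠ 0)
include hD

theorem relationsOn_diff_singleton_eq_of_mem_principalPart (hf : f ∈ D)
    (hg : g ∈ principalPart K v D f) :
    relationsOn K v (↑D \ {f}) = relationsOn K v (↑D \ {g}) := by
  obtain ⟨hgD, hvanish⟩ := mem_principalPart.1 hg
  refine Submodule.eq_of_le_of_finrank_eq
    (fun ω hω => mem_relationsOn_diff_singleton.2
      ⟨relationsOn_mono Set.sdiff_subset hω, hvanish ω hω⟩) ?_
  have hf' := finrank_relationsOn_diff_singleton_add_one_iff.2 (hD f hf)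
  have hg' := finrank_relationsOn_diff_singleton_add_one_iff.2 (hD g hgD)
  omega

theorem principalPart_eq_of_mem (hf : f ∈ D) (hg : g ∈ principalPart K v D f) :
    principalPart K v D g = principalPart K v D f := by
  rw [principalPart, principalPart, relationsOn_diff_singleton_eq_of_mem_principalPart hD hf hg]

theorem principalPart_eq_or_disjoint (hf : f ∈ D) (hg : g ∈ D) :
    principalPart K v D f = principalPart K v D g ∨
      Disjoint (principalPart K v D f) (principalPart K v D g) := by
  refine or_iff_not_imp_right.2 fun hdisj => ?_
  obtain ⟨h, hhf, hhg⟩ := Finset.not_disjoint_iff.1 hdisj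
  rw [← principalPart_eq_of_mem hD hf hhf, principalPart_eq_of_mem hD hg hhg]

theorem exists_sdiff_principalPart_eq [DecidableEq ι] {B : Finset ι} (hBD : B ⊆ D)
    (hB : finrank K (relationsOn K v B) + 1 = finrank K (relationsOn K v D))
    (hBc : ∀ g ∈ B, ∃ ω ∈ relationsOn K v ↑B, ω g ≠ 0) :
    ∃ f ∈ D, D \ principalPart K v D f = B := by
  obtain ⟨f, hfD, hfB⟩ : ∃ f ∈ D, f ∉ B := Finset.not_subset.1 fun hDB => by
    rw [Finset.Subset.antisymm hBD hDB] at hB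
    omega
  have hBf : relationsOn K v ↑B = relationsOn K v (↑D \ {f}) := by
    refine Submodule.eq_of_le_of_finrank_eq (relationsOn_mono ?_) ?_
    · exact fun g hg => ⟨hBD hg, fun hgf => hfB (hgf ▸ hg)⟩
    · have := finrank_relationsOn_diff_singleton_add_one_iff.2 (hD f hfD)
      omega
  refine ⟨f, hfD, Finset.ext fun g => ?_⟩
  rw [Finset.mem_sdiff, mem_principalPart, ← hBf]
  constructor
  · rintro ⟨hgD, hg⟩
    by_contra hgB
    exact hg ⟨hgD, fun ω hω => (mem_relationsOn.1 hω).1 g hgB⟩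
  · intro hgB
    obtain ⟨ω, hω, hωg⟩ := hBc g hgB
    exact ⟨hBD hgB, fun h => hωg (h.2 ω hω)⟩

end PrincipalPartition

section Counting

variable {K M ι : Type*} [Field K] [AddCommGroup M] [Module K M] [Finite ι] [DecidableEq ι]
  {v : ι → M} {D : Finset ι}

theorem card_image_principalPart
    (hsupp : ∀ f ∈ D, ∃ ω ∈ relationsOn K v ↑(principalPart K v D f), ω f ≠ 0) :
    (D.image (principalPart K v D)).card = finrank K (relationsOn K v D) := by
  have hD : ∀ f ∈ D, ∃ ω ∈ relationsOn K v ↑D, ω f ≠ 0 := fun f hf => by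
    obtain ⟨ω, hω, hωf⟩ := hsupp f hf
    exact ⟨ω, relationsOn_mono principalPart_subset hω, hωf⟩
  obtain ⟨T, hTD, hinj, hT⟩ := Finset.exists_subset_injOn_image_eq_of_surjOn
    (f := principalPart K v D) (D : Set ι) (D.image (principalPart K v D))
    (by rw [Finset.coe_image]; exact Set.surjOn_image _ _)
  let eval : relationsOn K v D →ₗ[K] (T → K) :=
    (LinearMap.pi fun t : T => Finsupp.lapply (t : ι)).comp (Submodule.subtype _)
  have heval_inj : Function.Injective eval := by
    refine (LinearMap.ker_eq_bot (M := relationsOn K v ↑D) (f := eval)).1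
      (LinearMap.ker_eq_bot'.2 fun ω hω => Subtype.ext ?_)
    refine eq_zero_of_image_principalPart_eq hT ω.2 fun t ht => ?_
    exact congr_fun hω ⟨t, ht⟩
  have heval_surj : Function.Surjective eval := by
    rw [← LinearMap.range_eq_top, eq_top_iff, ← (Pi.basisFun K T).span_eq, span_le]
    rintro _ ⟨t, rfl⟩
    obtain ⟨ω, hω, hωt⟩ := hsupp t (hTD t.2)
    refine ⟨⟨(ω t)⁻¹ • ω, smul_mem _ _ (relationsOn_mono principalPart_subset hω)⟩, ?_⟩
    funext t'
    by_cases htt' : t = t'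
    · subst htt'
      simp [eval, hωt]
    · have ht' : (t' : ι) ∉ principalPart K v D t := fun ht' =>
        htt' (Subtype.ext (hinj t.2 t'.2 (principalPart_eq_of_mem hD (hTD t.2) ht').symm))
      simp [eval, htt', (mem_relationsOn.1 hω).1 t' ht']
  rw [← hT, Finset.card_image_of_injOn hinj,
    (LinearEquiv.ofBijective eval ⟨heval_inj, heval_surj⟩).finrank_eq,
    finrank_fintype_fun_eq_card, Fintype.card_coe]

end Counting

section RigidityMatrix

variable {d : ℕ} {V : Type*} [DecidableEq V] {p : V → Fin d → ℝ}

theorem rigRow_apply_of_notMem {e : Sym2 V} {w : V} (h : w ∉ e) (i : Fin d) :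
    rigRow d p e (w, i) = 0 := by
  induction e using Sym2.ind with
  | _ u u' =>
    rw [Sym2.mem_iff, not_or] at h
    simp [rigRow, h.1, h.2]

theorem linearCombination_rigRow_apply (ω : Sym2 V →₀ ℝ) (w : V) (i : Fin d) :
    Finsupp.linearCombination ℝ (rigRow d p) ω (w, i) =
      ∑ e ∈ ω.support, ω e * rigRow d p e (w, i) := by
  rw [Finsupp.linearCombination_apply, Finsupp.sum, Finset.sum_apply]
  rfl

theorem linearCombination_rigRow_apply_eq_zero {ω : Sym2 V →₀ ℝ} {w : V}
    (h : ∀ e ∈ ω.support, w ∉ e) (i : Fin d) :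
    Finsupp.linearCombination ℝ (rigRow d p) ω (w, i) = 0 := by
  rw [linearCombination_rigRow_apply]
  exact Finset.sum_eq_zero fun e he => mul_eq_zero_of_right _ (rigRow_apply_of_notMem (h e he) i)

variable [Fintype V]

theorem sum_rigRow_apply (e : Sym2 V) (i : Fin d) : ∑ w, rigRow d p e (w, i) = 0 := by
  induction e using Sym2.ind with
  | _ u u' => simp [rigRow, sub_mul, Finset.sum_sub_distrib]

theorem sum_linearCombination_rigRow_apply (ω : Sym2 V →₀ ℝ) (i : Fin d) :
    ∑ w, Finsupp.linearCombination ℝ (rigRow d p) ω (w, i) = 0 := by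
  simp_rw [linearCombination_rigRow_apply]
  rw [Finset.sum_comm]
  simp [← Finset.mul_sum, sum_rigRow_apply]

def SplitsAt (D A : Finset (Sym2 V)) (w : V) : Prop :=
  (∃ e ∈ D, w ∈ e ∧ e ∉ A) ∧ ∃ e ∈ A, w ∈ e

/-- At a vertex that `A` does not split, the equilibrium condition of `ω` restricted to `A` is
either the full condition or empty; at the remaining vertex it follows from the others, since
the rows of the rigidity matrix are orthogonal to translations. -/
theorem filter_mem_relationsOn_rigRow {D A : Finset (Sym2 V)} {ω : Sym2 V →₀ ℝ}
    (hω : ω ∈ relationsOn ℝ (rigRow d p) D) (hA : {w | SplitsAt D A w}.Subsingleton) :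
    ω.filter (· ∈ A) ∈ relationsOn ℝ (rigRow d p) A := by
  obtain ⟨hωD, hωrel⟩ := mem_relationsOn.1 hω
  have hunsplit : ∀ w, ¬ SplitsAt D A w → ∀ i,
      Finsupp.linearCombination ℝ (rigRow d p) (ω.filter (· ∈ A)) (w, i) = 0 := by
    intro w hw i
    rcases not_and_or.1 hw with hall | hnone
    · have hcompl : Finsupp.linearCombination ℝ (rigRow d p) (ω.filter (· ∈ A)) =
          -Finsupp.linearCombination ℝ (rigRow d p) (ω.filter (· ∉ A)) := by
        rw [eq_neg_iff_add_eq_zero, ← map_add, Finsupp.filter_add_filter_not, hωrel]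
      rw [hcompl, Pi.neg_apply, neg_eq_zero]
      refine linearCombination_rigRow_apply_eq_zero (fun e he hwe => ?_) i
      rw [Finsupp.support_filter, Finset.mem_filter, Finsupp.mem_support_iff] at he
      exact hall ⟨e, by_contra fun heD => he.1 (hωD e heD), hwe, he.2⟩
    · refine linearCombination_rigRow_apply_eq_zero (fun e he hwe => ?_) i
      rw [Finsupp.support_filter, Finset.mem_filter] at he
      exact hnone ⟨e, he.2, hwe⟩
  refine mem_relationsOn.2 ⟨fun e he => Finsupp.filter_apply_neg _ _ he, funext ?_⟩
  rintro ⟨w, i⟩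
  by_cases hw : SplitsAt D A w
  · calc Finsupp.linearCombination ℝ (rigRow d p) (ω.filter (· ∈ A)) (w, i)
        = ∑ u, Finsupp.linearCombination ℝ (rigRow d p) (ω.filter (· ∈ A)) (u, i) :=
          (Finset.sum_eq_single w (fun u _ hu => hunsplit u (fun hu' => hu (hA hu' hw)) i)
            (by simp)).symm
      _ = 0 := sum_linearCombination_rigRow_apply _ i
  · exact hunsplit w hw i

end RigidityMatrix

section KFoldCircuit

variable {d : ℕ} {V : Type*} [Fintype V] [DecidableEq V] {p : V → Fin d → ℝ}

theorem finrank_relationsOn_add_rrk (F : Finset (Sym2 V)) :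
    finrank ℝ (relationsOn ℝ (rigRow d p) F) + rrk d p F = F.card :=
  finrank_relationsOn_add_finrank_span F

theorem isKFoldCircuit_iff {D : Finset (Sym2 V)} {k : ℕ} :
    IsKFoldCircuit d p D k ↔ finrank ℝ (relationsOn ℝ (rigRow d p) D) = k ∧
      ∀ f ∈ D, ∃ ω ∈ relationsOn ℝ (rigRow d p) D, ω f ≠ 0 := by
  have hD := finrank_relationsOn_add_rrk (p := p) D
  rw [IsKFoldCircuit, and_comm]
  refine and_congr (by constructor <;> intro <;> omega) (forall₂_congr fun f hf => ?_)
  have hDf := finrank_relationsOn_add_rrk (p := p) (D.erase f)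
  rw [Finset.coe_erase, Finset.card_erase_of_mem hf] at hDf
  rw [← finrank_relationsOn_diff_singleton_add_one_iff]
  have := Finset.card_pos.2 ⟨f, hf⟩
  constructor <;> intro <;> omega

variable {D : Finset (Sym2 V)} {k : ℕ}

theorem isPrincipalPart_iff (hk : 1 ≤ k) (hD : IsKFoldCircuit d p D k) {A : Finset (Sym2 V)} :
    IsPrincipalPart d p D k A ↔ ∃ f ∈ D, principalPart ℝ (rigRow d p) D f = A := by
  obtain ⟨hrank, hcoloop⟩ := isKFoldCircuit_iff.1 hD
  constructor
  · rintro ⟨B, hBD, hB, rfl⟩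
    obtain ⟨hBrank, hBcoloop⟩ := isKFoldCircuit_iff.1 hB
    obtain ⟨f, hf, hfB⟩ := exists_sdiff_principalPart_eq hcoloop hBD (by omega) hBcoloop
    exact ⟨f, hf, by rw [← hfB, Finset.sdiff_sdiff_eq_self principalPart_subset]⟩
  · rintro ⟨f, hf, rfl⟩
    refine ⟨D \ principalPart ℝ (rigRow d p) D f, Finset.sdiff_subset,
      isKFoldCircuit_iff.2 ⟨?_, fun g hg => ?_⟩,
      (Finset.sdiff_sdiff_eq_self principalPart_subset).symm⟩
    · have := finrank_relationsOn_diff_singleton_add_one_iff.2 (hcoloop f hf)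
      rw [relationsOn_sdiff_principalPart hf]
      omega
    · obtain ⟨hgD, hgf⟩ := Finset.mem_sdiff.1 hg
      rw [relationsOn_sdiff_principalPart hf]
      by_contra! h
      exact hgf (mem_principalPart.2 ⟨hgD, h⟩)

theorem setOf_isPrincipalPart_eq (hk : 1 ≤ k) (hD : IsKFoldCircuit d p D k) :
    {A | IsPrincipalPart d p D k A} = ↑(D.image (principalPart ℝ (rigRow d p) D)) := by
  ext A
  simp [isPrincipalPart_iff hk hD]

theorem Monochromatic.not_splitsAt_principalPart (hk : 1 ≤ k) (hD : IsKFoldCircuit d p D k)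
    {w : V} (hw : Monochromatic d p D k w) {f : Sym2 V} (hf : f ∈ D) :
    ¬ SplitsAt D (principalPart ℝ (rigRow d p) D f) w := by
  obtain ⟨A, hA, hwA⟩ := hw
  obtain ⟨g, hg, rfl⟩ := (isPrincipalPart_iff hk hD).1 hA
  rintro ⟨⟨e, heD, hwe, hef⟩, e', he'f, hwe'⟩
  rcases principalPart_eq_or_disjoint (isKFoldCircuit_iff.1 hD).2 hg hf with h | h
  · exact hef (h ▸ hwA e heD hwe)
  · exact Finset.disjoint_left.1 h (hwA e' (principalPart_subset he'f) hwe') he'f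

end KFoldCircuit

theorem kfold_circuit_one_technicolour_trivial_general
    (d k : ℕ) (hk : 1 ≤ k)
    {V : Type*} [Fintype V] [DecidableEq V]
    (D : Finset (Sym2 V))
    (p : V → Fin d → ℝ)
    (hD : IsKFoldCircuit d p D k)
    (htech : ({w : V | ¬ Monochromatic d p D k w}).Subsingleton) :
    Set.ncard {A : Finset (Sym2 V) | IsPrincipalPart d p D k A} = k := by
  obtain ⟨hrank, hcoloop⟩ := isKFoldCircuit_iff.1 hD
  rw [setOf_isPrincipalPart_eq hk hD, Set.ncard_coe_finset, ← hrank]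
  refine card_image_principalPart fun f hf => ?_
  obtain ⟨ω, hω, hωf⟩ := hcoloop f hf
  have hsplit : {w | SplitsAt D (principalPart ℝ (rigRow d p) D f) w}.Subsingleton :=
    htech.anti fun w hw hmono => hmono.not_splitsAt_principalPart hk hD hf hw
  refine ⟨ω.filter (· ∈ principalPart ℝ (rigRow d p) D f),
    filter_mem_relationsOn_rigRow hω hsplit, ?_⟩
  simpa [Finsupp.filter_apply, mem_principalPart_self hf] using hωf

/-- Proposition 3.10: a `k`-fold `R_d`-circuit with at most one technicolour
vertex is trivial, i.e. its principal partition has exactly `k` parts. -/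
theorem kfold_circuit_one_technicolour_trivial
    (d k : ℕ) (hd : 1 ≤ d) (hk : 1 ≤ k)
    {V : Type*} [Fintype V] [DecidableEq V]
    (D : Finset (Sym2 V)) (hsimple : ∀ e ∈ D, ¬ e.IsDiag)
    (hcov : ∀ w : V, ∃ e ∈ D, w ∈ e)
    (p : V → Fin d → ℝ) (hp : Generic d p)
    (hD : IsKFoldCircuit d p D k)
    (htech : ({w : V | ¬ Monochromatic d p D k w}).Subsingleton) :
    Set.ncard {A : Finset (Sym2 V) | IsPrincipalPart d p D k A} = k :=
  kfold_circuit_one_technicolour_trivial_general d k hk D p hD htech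
end
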